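/- arXiv:1106.3874 — 4 statements merged into one kernel-verified Lean document; each statement's English description precedes it below -/
import Mathlib

section
/- If X and Y are n-tuples of nonempty subsets of N with Sec(X) = Sec(Y), then there exist indices i₀, j₀ such that X_{i₀} = Y_{j₀}. -/
open scoped Classical

/-- Characteristic vector of `a` along the tuple `Z`. -/
noncomputable def chi {N : Type*} {n : ℕ} (Z : Fin n → Set N) (a : N) : Fin n → Bool :=
  fun i => decide (a ∈ Z i)

/-- Weight: number of `true` coordinates. -/
def wt {n : ℕ} (u : Fin n → Bool) : ℕ :=
  (Finset.univ.filter fun i => u i = true).card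

/-- The set of unordered sections of the tuple `X`. -/
def Sec {N : Type*} {n : ℕ} (X : Fin n → Set N) : Set (Multiset N) :=
  { m | ∃ a : Fin n → N, ∃ σ : Equiv.Perm (Fin n),
      (∀ i, a i ∈ X (σ i)) ∧ m = (List.ofFn a : Multiset N) }

/-- Lift of a boolean function to tuples of sets. -/
noncomputable def liftFn {N : Type*} {n m : ℕ}
    (f : (Fin n → Bool) → (Fin m → Bool)) (Y : Fin n → Set N) : Fin m → Set N :=
  fun i => { a | f (chi Y a) i = true }

/-!
Every member of a section of `X` meets every `X i`, while a section of `Y` avoiding a set `S`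
exists as soon as no `Y j` lies inside `S`. Hence `Sec X = Sec Y` forces every `X i` to contain
some `Y j` and vice versa, and then an inclusion-minimal `X i` must equal the `Y j` below it.
-/

section Sec

variable {N : Type*} {n : ℕ}

theorem ofFn_mem_Sec {X : Fin n → Set N} {a : Fin n → N} (ha : ∀ i, a i ∈ X i) :
    (List.ofFn a : Multiset N) ∈ Sec X :=
  ⟨a, Equiv.refl _, ha, rfl⟩

theorem exists_mem_of_mem_Sec {X : Fin n → Set N} {m : Multiset N} (hm : m ∈ Sec X) (i : Fin n) :
    ∃ x ∈ m, x ∈ X i := by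
  obtain ⟨a, σ, ha, rfl⟩ := hm
  exact ⟨a (σ.symm i), by simp [List.mem_ofFn],
    by simpa only [Equiv.apply_symm_apply] using ha (σ.symm i)⟩

theorem exists_subset_of_Sec_subset {X Y : Fin n → Set N} (h : Sec Y ⊆ Sec X) {S : Set N}
    {i : Fin n} (hi : X i ⊆ S) : ∃ j, Y j ⊆ S := by
  by_contra! hY
  choose b hbY hbS using fun j => Set.not_subset.mp (hY j)
  obtain ⟨x, hxb, hxX⟩ := exists_mem_of_mem_Sec (h (ofFn_mem_Sec hbY)) i
  obtain ⟨j, rfl⟩ := List.mem_ofFn.mp (Multiset.mem_coe.mp hxb)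
  exact hbS j (hi hxX)

end Sec

theorem exists_eq_of_forall_exists_le {ι κ α : Type*} [Finite ι] [Nonempty ι] [PartialOrder α]
    {X : ι → α} {Y : κ → α} (hXY : ∀ i, ∃ j, Y j ≤ X i) (hYX : ∀ j, ∃ i, X i ≤ Y j) :
    ∃ i j, X i = Y j := by
  obtain ⟨i, -, hmin⟩ :=
    Set.finite_univ.exists_minimalFor X Set.univ Set.univ_nonempty
  obtain ⟨j, hji⟩ := hXY i
  obtain ⟨i', hi'j⟩ := hYX j
  exact ⟨i, j, le_antisymm (le_trans (hmin (Set.mem_univ i') (hi'j.trans hji)) hi'j) hji⟩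

theorem stmt1_general {N : Type*} {n : ℕ} (hn : 1 ≤ n) (X Y : Fin n → Set N)
    (h : Sec X = Sec Y) :
    ∃ i₀ j₀ : Fin n, X i₀ = Y j₀ := by
  have : Nonempty (Fin n) := ⟨⟨0, hn⟩⟩
  exact exists_eq_of_forall_exists_le
    (fun i => exists_subset_of_Sec_subset h.ge subset_rfl)
    (fun j => exists_subset_of_Sec_subset h.le subset_rfl)

theorem stmt1 {N : Type*} {n : ℕ} (hn : 1 ≤ n) (X Y : Fin n → Set N)
    (hX : ∀ i, (X i).Nonempty) (hY : ∀ i, (Y i).Nonempty)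
    (h : Sec X = Sec Y) :
    ∃ i₀ j₀ : Fin n, X i₀ = Y j₀ :=
  stmt1_general hn X Y h
end

section
/- Let X, Y be n-tuples of nonempty subsets of N and define f : B^n → B^n by f(u) = ⋁_{a : χ_Y(a) ≤ u} χ_X(a). Then Sec(X) ⊆ Sec(Y) if and only if |f(u)| ≤ |u| for all u ∈ B^n. -/
open scoped Classical

/-!
A section of `X` may be taken in the order of `X`, i.e. as `b` with `b i ∈ X i`. Then
`Sec X ⊆ Sec Y` says that every such `b` can be rearranged into a section of `Y`, which by
Hall's theorem means `#s ≤ #{i | b i ∈ Y j for some j ∈ s}` for every set `s` of indices.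
Taking `u` to be the indicator of `sᶜ`, every `i` outside that neighbourhood of `s` has
`χ_Y (b i) ≤ u`, so lies in the support of `f u`; thus `|f u| ≤ |u|` gives Hall's condition.
Conversely, for a given `u` pick `b i` witnessing `f u i = 1` wherever possible: the values
`x` of `b` with `χ_Y x ≤ u` are at least `|f u|` in number, and in any ordering `c` of them as a
section of `Y` such a value `c j ∈ Y j` forces `u j = 1`.
-/

section

open Finset

variable {N : Type*} {n : ℕ}

lemma multiset_ofFn_comp_perm (a : Fin n → N) (σ : Equiv.Perm (Fin n)) :
    (List.ofFn (a ∘ σ) : Multiset N) = List.ofFn a := by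
  rw [← Fin.univ_val_map, ← Fin.univ_val_map, ← Multiset.map_map, Multiset.map_univ_val_equiv]

lemma mem_Sec_iff {X : Fin n → Set N} {m : Multiset N} :
    m ∈ Sec X ↔ ∃ b : Fin n → N, (∀ i, b i ∈ X i) ∧ m = List.ofFn b := by
  constructor
  · rintro ⟨a, σ, ha, rfl⟩
    exact ⟨a ∘ σ.symm, fun i => by simpa using ha (σ.symm i),
      (multiset_ofFn_comp_perm a σ.symm).symm⟩
  · rintro ⟨b, hb, rfl⟩
    exact ⟨b, 1, hb, rfl⟩

lemma countP_multiset_ofFn (b : Fin n → N) (p : N → Prop) [DecidablePred p] :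
    (List.ofFn b : Multiset N).countP p = #{i | p (b i)} := by
  rw [← Fin.univ_val_map, Multiset.countP_map]
  rfl

lemma countP_chi_le_le_wt {Y : Fin n → Set N} {c : Fin n → N} (hc : ∀ j, c j ∈ Y j)
    (u : Fin n → Bool) : (List.ofFn c : Multiset N).countP (fun x => chi Y x ≤ u) ≤ wt u := by
  rw [countP_multiset_ofFn]
  refine card_le_card fun j hj => ?_
  simp only [mem_filter, mem_univ, true_and] at hj ⊢
  exact Bool.le_iff_imp.mp (by simpa [chi, hc j] using hj j) rfl

lemma exists_section_chi_le {X Y : Fin n → Set N} (hX : ∀ i, (X i).Nonempty)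
    {f : (Fin n → Bool) → (Fin n → Bool)}
    (hf : ∀ u i, f u i = true ↔ ∃ a : N, chi Y a ≤ u ∧ chi X a i = true) (u : Fin n → Bool) :
    ∃ b : Fin n → N, (∀ i, b i ∈ X i) ∧ ∀ i, f u i = true → chi Y (b i) ≤ u := by
  have (i : Fin n) : ∃ x ∈ X i, f u i = true → chi Y x ≤ u := by
    by_cases h : f u i = true
    · obtain ⟨a, haY, haX⟩ := (hf u i).mp h
      exact ⟨a, by simpa [chi] using haX, fun _ => haY⟩
    · obtain ⟨x, hx⟩ := hX i
      exact ⟨x, hx, fun h' => absurd h' h⟩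
  choose b hbX hbY using this
  exact ⟨b, hbX, hbY⟩

lemma wt_le_countP_chi_le {Y : Fin n → Set N} {f : (Fin n → Bool) → (Fin n → Bool)}
    {u : Fin n → Bool} {b : Fin n → N} (hb : ∀ i, f u i = true → chi Y (b i) ≤ u) :
    wt (f u) ≤ (List.ofFn b : Multiset N).countP (fun x => chi Y x ≤ u) := by
  rw [countP_multiset_ofFn]
  exact card_le_card fun i hi => by simpa using hb i (by simpa using hi)

lemma wt_decide_not_mem (s : Finset (Fin n)) : wt (fun j => decide (j ∉ s)) = #sᶜ := by
  unfold wt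
  congr 1
  ext j
  simp

lemma card_le_card_biUnion_of_wt_le {X Y : Fin n → Set N} {f : (Fin n → Bool) → (Fin n → Bool)}
    (hf : ∀ u i, f u i = true ↔ ∃ a : N, chi Y a ≤ u ∧ chi X a i = true)
    (hw : ∀ u, wt (f u) ≤ wt u) {b : Fin n → N} (hb : ∀ i, b i ∈ X i) (s : Finset (Fin n)) :
    #s ≤ #(s.biUnion fun j => {i | b i ∈ Y j}) := by
  set T := s.biUnion fun j => {i | b i ∈ Y j}
  set u : Fin n → Bool := fun j => decide (j ∉ s)
  have hsupp : Tᶜ ⊆ ({i | f u i = true} : Finset (Fin n)) := by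
    intro i hi
    simp only [T, mem_compl, mem_biUnion, mem_filter, mem_univ, true_and, not_exists,
      not_and] at hi
    simp only [mem_filter, mem_univ, true_and]
    refine (hf u i).mpr ⟨b i, fun j => ?_, by simp [chi, hb i]⟩
    by_cases hbj : b i ∈ Y j
    · have hj : j ∉ s := fun hj => hi j hj hbj
      simp [u, chi, hbj, hj]
    · simp [chi, hbj]
  have hcompl : #Tᶜ ≤ #sᶜ := (card_le_card hsupp).trans ((hw u).trans (wt_decide_not_mem s).le)
  have hs := card_add_card_compl s
  have hT := card_add_card_compl T
  omega

lemma ofFn_mem_Sec_of_card_le_card_biUnion {Y : Fin n → Set N} {b : Fin n → N}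
    (hall : ∀ s : Finset (Fin n), #s ≤ #(s.biUnion fun j => {i | b i ∈ Y j})) :
    (List.ofFn b : Multiset N) ∈ Sec Y := by
  obtain ⟨τ, hτ, hτY⟩ := (all_card_le_biUnion_card_iff_exists_injective _).mp hall
  let e := Equiv.ofBijective τ (Finite.injective_iff_bijective.mp hτ)
  refine ⟨b, e.symm, fun i => ?_, rfl⟩
  have hτi : τ (e.symm i) = i := e.apply_symm_apply i
  simpa [hτi] using hτY (e.symm i)

end

theorem stmt5_general {N : Type*} {n : ℕ} (X Y : Fin n → Set N)
    (hX : ∀ i, (X i).Nonempty)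
    (f : (Fin n → Bool) → (Fin n → Bool))
    (hf : ∀ u i, f u i = true ↔ ∃ a : N, chi Y a ≤ u ∧ chi X a i = true) :
    Sec X ⊆ Sec Y ↔ ∀ u : Fin n → Bool, wt (f u) ≤ wt u := by
  constructor
  · intro hsub u
    obtain ⟨b, hbX, hbY⟩ := exists_section_chi_le hX hf u
    obtain ⟨c, hcY, hbc⟩ := mem_Sec_iff.mp (hsub (mem_Sec_iff.mpr ⟨b, hbX, rfl⟩))
    calc wt (f u) ≤ (List.ofFn b : Multiset N).countP (fun x => chi Y x ≤ u) :=
          wt_le_countP_chi_le hbY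
      _ = (List.ofFn c : Multiset N).countP (fun x => chi Y x ≤ u) := by rw [hbc]
      _ ≤ wt u := countP_chi_le_le_wt hcY u
  · intro hw m hm
    obtain ⟨b, hbX, rfl⟩ := mem_Sec_iff.mp hm
    exact ofFn_mem_Sec_of_card_le_card_biUnion (card_le_card_biUnion_of_wt_le hf hw hbX)

theorem stmt5 {N : Type*} {n : ℕ} (X Y : Fin n → Set N)
    (hX : ∀ i, (X i).Nonempty) (hY : ∀ i, (Y i).Nonempty)
    (f : (Fin n → Bool) → (Fin n → Bool))
    (hf : ∀ u i, f u i = true ↔ ∃ a : N, chi Y a ≤ u ∧ chi X a i = true) :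
    Sec X ⊆ Sec Y ↔ ∀ u : Fin n → Bool, wt (f u) ≤ wt u :=
  stmt5_general X Y hX f hf
end

section
/- If Sec(X) ⊆ Sec(Y), then for every a ∈ N the number of components of X containing a is at most the number of components of Y containing a, i.e. |χ_X(a)| ≤ |χ_Y(a)|. -/
open scoped Classical

/-! A section of `X` may take the value `a` in every component of `X` containing `a`, so `a`
occurs at least `|χ_X(a)|` times in it. In a section of `Y`, every occurrence of `a` is picked
from a different component of `Y`, which then contains `a`, so `a` occurs at most `|χ_Y(a)|`
times. -/

open Finset

lemma count_ofFn_eq_card_filter {N : Type*} {n : ℕ} (f : Fin n → N) (a : N) :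
    (List.ofFn f : Multiset N).count a = #{i | f i = a} := by
  rw [← Fin.univ_val_map, Multiset.count_map, Finset.card_def, Finset.filter_val]
  simp only [eq_comm]

lemma wt_comp_perm {n : ℕ} (u : Fin n → Bool) (σ : Equiv.Perm (Fin n)) : wt (u ∘ σ) = wt u := by
  simp only [wt, Function.comp_apply]
  exact Finset.card_equiv σ (by simp)

lemma wt_chi_eq_card {N : Type*} {n : ℕ} (Z : Fin n → Set N) (a : N) :
    wt (chi Z a) = #{i | a ∈ Z i} := by
  simp [wt, chi]

lemma count_le_wt_chi_of_mem_Sec {N : Type*} {n : ℕ} {X : Fin n → Set N} {m : Multiset N}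
    (hm : m ∈ Sec X) (a : N) : m.count a ≤ wt (chi X a) := by
  obtain ⟨c, σ, hc, rfl⟩ := hm
  calc (List.ofFn c : Multiset N).count a = #{i | c i = a} := count_ofFn_eq_card_filter c a
    _ ≤ #{i | a ∈ X (σ i)} := card_le_card (monotone_filter_right _ fun i _ hi => hi ▸ hc i)
    _ = wt (chi X a ∘ σ) := (wt_chi_eq_card (X ∘ σ) a).symm
    _ = wt (chi X a) := wt_comp_perm _ σ

lemma exists_mem_Sec_wt_chi_le_count {N : Type*} {n : ℕ} {X : Fin n → Set N}
    (hX : ∀ i, (X i).Nonempty) (a : N) : ∃ m ∈ Sec X, wt (chi X a) ≤ m.count a := by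
  let b : Fin n → N := fun i => if a ∈ X i then a else (hX i).some
  have hb : ∀ i, b i ∈ X i := fun i => by
    by_cases hi : a ∈ X i <;> simp [b, hi, (hX i).some_mem]
  refine ⟨List.ofFn b, ⟨b, 1, hb, rfl⟩, ?_⟩
  rw [count_ofFn_eq_card_filter, wt_chi_eq_card]
  exact card_le_card (monotone_filter_right _ fun i _ hi => by simp [b, hi])

theorem stmt14_general {N : Type*} {n : ℕ} (X Y : Fin n → Set N)
    (hX : ∀ i, (X i).Nonempty)
    (h : Sec X ⊆ Sec Y) :
    ∀ a : N, wt (chi X a) ≤ wt (chi Y a) := by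
  intro a
  obtain ⟨m, hm, hle⟩ := exists_mem_Sec_wt_chi_le_count hX a
  exact hle.trans (count_le_wt_chi_of_mem_Sec (h hm) a)

theorem stmt14 {N : Type*} {n : ℕ} (hn : 1 ≤ n) (X Y : Fin n → Set N)
    (hX : ∀ i, (X i).Nonempty) (hY : ∀ i, (Y i).Nonempty)
    (h : Sec X ⊆ Sec Y) :
    ∀ a : N, wt (chi X a) ≤ wt (chi Y a) :=
  stmt14_general X Y hX h
end

section
/- If f : B^n → B^n is increasing and contractive, then for every n-tuple Y of subsets of N, every unordered section of f̂(Y) (when all its components are nonempty) is an unordered section of Y. -/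
/-!
Given a section `a i ∈ f̂(Y)_{σ i}`, consider for each `i` the set of indices `j` with
`a i ∈ Y j`. For a set `s` of positions, let `u` be the indicator of the union of these index
sets. Then `χ_Y(a i) ≤ u` for `i ∈ s`, so by monotonicity `f u` is `1` at every `σ i`, and
contractivity gives `|s| ≤ |f u| ≤ |u|`. This is Hall's condition, and a Hall matching is a
permutation realising `a` as a section of `Y`.
-/

open scoped Classical

open Finset

theorem wt_decide_mem {n : ℕ} (s : Finset (Fin n)) : wt (fun j => decide (j ∈ s)) = s.card := by
  simp [wt]

theorem chi_le_of_forall_mem {N : Type*} {n : ℕ} {Y : Fin n → Set N} {a : N}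
    {u : Fin n → Bool} (h : ∀ j, a ∈ Y j → u j = true) : chi Y a ≤ u := by
  intro j
  by_cases hj : a ∈ Y j
  · simp [h j hj]
  · simp [chi, hj]

theorem card_le_card_biUnion_of_mem_liftFn {N ι : Type*} {n : ℕ}
    {f : (Fin n → Bool) → (Fin n → Bool)} (hmono : Monotone f)
    (hcontr : ∀ u, wt (f u) ≤ wt u) {Y : Fin n → Set N} {a : ι → N} {σ : ι → Fin n}
    (hσ : Function.Injective σ) (ha : ∀ i, a i ∈ liftFn f Y (σ i)) (s : Finset ι) :
    s.card ≤ (s.biUnion fun i => univ.filter fun j => a i ∈ Y j).card := by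
  set T := s.biUnion fun i => univ.filter fun j => a i ∈ Y j
  set u : Fin n → Bool := fun j => decide (j ∈ T)
  have hsupp : s.image σ ⊆ univ.filter fun j => f u j = true := by
    simp only [subset_iff, mem_image, mem_filter, mem_univ, true_and]
    rintro _ ⟨i, hi, rfl⟩
    have hle : chi Y (a i) ≤ u := chi_le_of_forall_mem fun j hj => by
      simpa [u, T] using ⟨i, hi, hj⟩
    have hfu := hmono hle (σ i)
    rw [show f (chi Y (a i)) (σ i) = true from ha i] at hfu
    exact le_antisymm (Bool.le_true _) hfu
  calc s.card = (s.image σ).card := (card_image_of_injective s hσ).symm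
    _ ≤ wt (f u) := card_le_card hsupp
    _ ≤ wt u := hcontr u
    _ = T.card := wt_decide_mem T

theorem ofFn_mem_Sec_of_hall {N : Type*} {n : ℕ} {Y : Fin n → Set N} {a : Fin n → N}
    (hall : ∀ s : Finset (Fin n),
      s.card ≤ (s.biUnion fun i => univ.filter fun j => a i ∈ Y j).card) :
    (List.ofFn a : Multiset N) ∈ Sec Y := by
  obtain ⟨g, hginj, hg⟩ := (all_card_le_biUnion_card_iff_exists_injective _).mp hall
  refine ⟨a, Equiv.ofBijective g (Finite.injective_iff_bijective.mp hginj), fun i => ?_, rfl⟩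
  simpa using hg i

theorem stmt17_general {N : Type*} {n : ℕ} (f : (Fin n → Bool) → (Fin n → Bool))
    (hmono : Monotone f) (hcontr : ∀ u, wt (f u) ≤ wt u)
    (Y : Fin n → Set N) :
    Sec (liftFn f Y) ⊆ Sec Y := by
  rintro _ ⟨a, σ, ha, rfl⟩
  exact ofFn_mem_Sec_of_hall (card_le_card_biUnion_of_mem_liftFn hmono hcontr σ.injective ha)

theorem stmt17 {N : Type*} {n : ℕ} (f : (Fin n → Bool) → (Fin n → Bool))
    (hmono : Monotone f) (hcontr : ∀ u, wt (f u) ≤ wt u)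
    (Y : Fin n → Set N) (hne : ∀ i, (liftFn f Y i).Nonempty) :
    Sec (liftFn f Y) ⊆ Sec Y :=
  stmt17_general f hmono hcontr Y
end
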